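/- Case-completion commutes with CaseCase-normalisation: for every term t of the lambda calculus with constructors, the CaseCase normal form of ⌈t⌉ equals the case-completion of the CaseCase normal form of t: cnf(⌈t⌉) = ⌈cnf(t)⌉. -/

import Mathlib

/- Terms of the lambda calculus with `n` constructors (de Bruijn indices).
`Ob n` plays the role of `Option (Tm n)`: a case-binding is a partial map
`Fin n → Ob n` from constructors to terms. -/
mutual
inductive Tm (n : ℕ) : Type where
  | var : ℕ → Tm n
  | app : Tm n → Tm n → Tm n
  | lam : Tm n → Tm n
  | cst : Fin n → Tm n
  | cas : (Fin n → Ob n) → Tm n → Tm n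
inductive Ob (n : ℕ) : Type where
  | none : Ob n
  | some : Tm n → Ob n
end

namespace LC

variable {n : ℕ}

/- Shift free de Bruijn indices `≥ k` by `d`. -/
mutual
def lift (d k : ℕ) : Tm n → Tm n
  | .var i => .var (if i < k then i else i + d)
  | .app t u => .app (lift d k t) (lift d k u)
  | .lam t => .lam (lift d (k+1) t)
  | .cst c => .cst c
  | .cas θ t => .cas (fun c => liftO d k (θ c)) (lift d k t)
def liftO (d k : ℕ) : Ob n → Ob n
  | .none => .none
  | .some t => .some (lift d k t)
end

/- Lift a case-binding (used for the CaseLam rule, where the bound variable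
must not occur free in the binding). -/
def liftB (θ : Fin n → Ob n) : Fin n → Ob n := fun c => liftO 1 0 (θ c)

/- Substitution of `u` for the variable `k` (capture-avoiding). -/
mutual
def subst (u : Tm n) (k : ℕ) : Tm n → Tm n
  | .var i => if i < k then .var i else if i = k then lift k 0 u else .var (i-1)
  | .app t v => .app (subst u k t) (subst u k v)
  | .lam t => .lam (subst u (k+1) t)
  | .cst c => .cst c
  | .cas θ t => .cas (fun c => substO u k (θ c)) (subst u k t)
def substO (u : Tm n) (k : ℕ) : Ob n → Ob n
  | .none => .none
  | .some t => .some (subst u k t)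
end

/- `{θ}·(-)` applied inside an optional branch. -/
def casO (θ : Fin n → Ob n) : Ob n → Ob n
  | .none => .none
  | .some u => .some (.cas θ u)

/- Composition of case-bindings: `(θ∘φ)(c) = {θ}·φ(c)` for `c ∈ dom φ`. -/
def compB (θ φ : Fin n → Ob n) : Fin n → Ob n := fun c => casO θ (φ c)

/- One-step reduction of the lambda calculus with constructors:
AppLam, LamApp, CaseCons, CaseApp, CaseLam, CaseCase, closed under all contexts. -/
inductive Step : Tm n → Tm n → Prop where
  | appLam (t u : Tm n) : Step (.app (.lam t) u) (subst u 0 t)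
  | lamApp (t : Tm n) : Step (.lam (.app (lift 1 0 t) (.var 0))) t
  | caseCons (θ : Fin n → Ob n) (c : Fin n) (u : Tm n) :
      θ c = .some u → Step (.cas θ (.cst c)) u
  | caseApp (θ : Fin n → Ob n) (t u : Tm n) :
      Step (.cas θ (.app t u)) (.app (.cas θ t) u)
  | caseLam (θ : Fin n → Ob n) (t : Tm n) :
      Step (.cas θ (.lam t)) (.lam (.cas (liftB θ) t))
  | caseCase (θ φ : Fin n → Ob n) (t : Tm n) :
      Step (.cas θ (.cas φ t)) (.cas (compB θ φ) t)
  | appL {t t' : Tm n} (u : Tm n) : Step t t' → Step (.app t u) (.app t' u)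
  | appR (t : Tm n) {u u' : Tm n} : Step u u' → Step (.app t u) (.app t u')
  | lamC {t t' : Tm n} : Step t t' → Step (.lam t) (.lam t')
  | casT (θ : Fin n → Ob n) {t t' : Tm n} : Step t t' → Step (.cas θ t) (.cas θ t')
  | casB (θ : Fin n → Ob n) (c : Fin n) {u u' : Tm n} (t : Tm n) :
      θ c = .some u → Step u u' →
      Step (.cas θ t) (.cas (Function.update θ c (.some u')) t)

/- One-step reduction by the CaseCase rule only (closed under all contexts). -/
inductive StepCC : Tm n → Tm n → Prop where
  | caseCase (θ φ : Fin n → Ob n) (t : Tm n) :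
      StepCC (.cas θ (.cas φ t)) (.cas (compB θ φ) t)
  | appL {t t' : Tm n} (u : Tm n) : StepCC t t' → StepCC (.app t u) (.app t' u)
  | appR (t : Tm n) {u u' : Tm n} : StepCC u u' → StepCC (.app t u) (.app t u')
  | lamC {t t' : Tm n} : StepCC t t' → StepCC (.lam t) (.lam t')
  | casT (θ : Fin n → Ob n) {t t' : Tm n} : StepCC t t' → StepCC (.cas θ t) (.cas θ t')
  | casB (θ : Fin n → Ob n) (c : Fin n) {u u' : Tm n} (t : Tm n) :
      θ c = .some u → StepCC u u' →
      StepCC (.cas θ t) (.cas (Function.update θ c (.some u')) t)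

/- One-step reduction λC⁻ : every rule except CaseCase (closed under all contexts). -/
inductive StepM : Tm n → Tm n → Prop where
  | appLam (t u : Tm n) : StepM (.app (.lam t) u) (subst u 0 t)
  | lamApp (t : Tm n) : StepM (.lam (.app (lift 1 0 t) (.var 0))) t
  | caseCons (θ : Fin n → Ob n) (c : Fin n) (u : Tm n) :
      θ c = .some u → StepM (.cas θ (.cst c)) u
  | caseApp (θ : Fin n → Ob n) (t u : Tm n) :
      StepM (.cas θ (.app t u)) (.app (.cas θ t) u)
  | caseLam (θ : Fin n → Ob n) (t : Tm n) :
      StepM (.cas θ (.lam t)) (.lam (.cas (liftB θ) t))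
  | appL {t t' : Tm n} (u : Tm n) : StepM t t' → StepM (.app t u) (.app t' u)
  | appR (t : Tm n) {u u' : Tm n} : StepM u u' → StepM (.app t u) (.app t u')
  | lamC {t t' : Tm n} : StepM t t' → StepM (.lam t) (.lam t')
  | casT (θ : Fin n → Ob n) {t t' : Tm n} : StepM t t' → StepM (.cas θ t) (.cas θ t')
  | casB (θ : Fin n → Ob n) (c : Fin n) {u u' : Tm n} (t : Tm n) :
      θ c = .some u → StepM u u' →
      StepM (.cas θ t) (.cas (Function.update θ c (.some u')) t)

/- A term is defined when none of its subterms is a match failure `{θ}·c` with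
`c ∉ dom θ`. -/
inductive Defined : Tm n → Prop where
  | var (i : ℕ) : Defined (.var i)
  | cst (c : Fin n) : Defined (.cst c)
  | app {t u : Tm n} : Defined t → Defined u → Defined (.app t u)
  | lam {t : Tm n} : Defined t → Defined (.lam t)
  | cas {θ : Fin n → Ob n} {t : Tm n} :
      (∀ c u, θ c = .some u → Defined u) → Defined t →
      (∀ c, t = .cst c → θ c ≠ .none) → Defined (.cas θ t)

/- Hereditarily defined: every reduct (in any number of steps) is defined. -/
def HD (t : Tm n) : Prop := ∀ u, Relation.ReflTransGen Step t u → Defined u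

section Completion
variable [NeZero n]

/- The canonical match failure `{}·c₁` used to fill missing branches. -/
def failTm : Tm n := .cas (fun _ => .none) (.cst 0)

/- Case-completion: replace every case-binding by its total completion,
filling each missing branch with `{}·c₁`. -/
mutual
def cpl : Tm n → Tm n
  | .var i => .var i
  | .app t u => .app (cpl t) (cpl u)
  | .lam t => .lam (cpl t)
  | .cst c => .cst c
  | .cas θ t => .cas (fun c => .some (cplO (θ c))) (cpl t)
def cplO : Ob n → Tm n
  | .none => failTm
  | .some u => cpl u
end

end Completion

/- The structural measure μ. -/
mutual
def mes : Tm n → ℕ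
  | .var _ => 1
  | .cst _ => 1
  | .lam t => mes t + 1
  | .app t u => mes t + mes u
  | .cas θ t => mes t * ((∑ c : Fin n, mesO (θ c)) + 2)
def mesO : Ob n → ℕ
  | .none => 0
  | .some t => mes t
end

end LC

/-! The CaseCase normal form is computed by a function `nf` that flattens every tower of
case-bindings `{θ}·{φ}·s` into `{θ∘φ}·s`; it terminates because the measure μ drops under
CaseCase. Since `nf` is invariant under CaseCase steps and fixes irreducible terms, it returns
the normal form of every term. Completion commutes with `nf`: composing completed bindings yields
the completion of the composed binding, up to a CaseCase step on the branches missing from the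
inner one. -/

namespace LC

variable {n : ℕ}

theorem mes_pos : ∀ t : Tm n, 0 < mes t
  | .var _ | .cst _ | .lam _ => by simp [mes]
  | .app t _ => by have := mes_pos t; simp only [mes]; omega
  | .cas _ t => by have := mes_pos t; simp only [mes]; positivity

theorem mes_lt_app_left (t u : Tm n) : mes t < mes (.app t u) := by
  have := mes_pos u; simp only [mes]; omega

theorem mes_lt_app_right (t u : Tm n) : mes u < mes (.app t u) := by
  have := mes_pos t; simp only [mes]; omega

theorem mes_lt_lam (t : Tm n) : mes t < mes (.lam t) := by
  simp only [mes]; omega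

theorem mes_lt_cas (θ : Fin n → Ob n) (t : Tm n) : mes t < mes (.cas θ t) := by
  have := mes_pos t
  simp only [mes]
  exact lt_mul_of_one_lt_right this (by omega)

theorem mesO_lt_cas (θ : Fin n → Ob n) (c : Fin n) (t : Tm n) :
    mesO (θ c) < mes (.cas θ t) := by
  have hc : mesO (θ c) ≤ ∑ c, mesO (θ c) :=
    Finset.single_le_sum (f := fun c => mesO (θ c)) (fun _ _ => Nat.zero_le _)
      (Finset.mem_univ c)
  have := mes_pos t
  simp only [mes]
  nlinarith

theorem mes_lt_cas_of_branch {θ : Fin n → Ob n} {c : Fin n} {u : Tm n} (t : Tm n)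
    (hc : θ c = .some u) : mes u < mes (.cas θ t) := by
  simpa [hc, mesO] using mesO_lt_cas θ c t

theorem mesO_casO (θ : Fin n → Ob n) (o : Ob n) :
    mesO (casO θ o) = mesO o * ((∑ c, mesO (θ c)) + 2) := by
  cases o <;> simp [casO, mesO, mes]

theorem mes_cas_compB_lt (θ φ : Fin n → Ob n) (s : Tm n) :
    mes (.cas (compB θ φ) s) < mes (.cas θ (.cas φ s)) := by
  have := mes_pos s
  simp only [mes, compB, mesO_casO, ← Finset.sum_mul]
  rw [mul_assoc]
  exact (Nat.mul_lt_mul_left this).2 (by rw [add_mul]; omega)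

/- `nfO (.some u)` calls `nf u` at the same measure; the second component breaks the tie. -/
mutual
def nf : Tm n → Tm n
  | .var i => .var i
  | .app t u => .app (nf t) (nf u)
  | .lam t => .lam (nf t)
  | .cst c => .cst c
  | .cas θ (.cas φ s) => nf (.cas (compB θ φ) s)
  | .cas θ t => .cas (fun c => nfO (θ c)) (nf t)
termination_by t => (mes t, 0)
decreasing_by
  all_goals apply Prod.Lex.left
  · exact mes_lt_app_left t u
  · exact mes_lt_app_right t u
  · exact mes_lt_lam t
  · exact mes_cas_compB_lt θ φ s
  · exact mesO_lt_cas θ c t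
  · exact mes_lt_cas θ t
def nfO : Ob n → Ob n
  | .none => .none
  | .some u => .some (nf u)
termination_by o => (mesO o, 1)
decreasing_by exact Prod.Lex.right _ zero_lt_one
end

def NotCas (t : Tm n) : Prop := ∀ φ s, t ≠ .cas φ s

theorem notCas_or_eq_cas : ∀ t : Tm n, NotCas t ∨ ∃ φ s, t = .cas φ s
  | .var _ | .app _ _ | .lam _ | .cst _ => .inl nofun
  | .cas φ s => .inr ⟨φ, s, rfl⟩

theorem nf_cas_cas (θ φ : Fin n → Ob n) (s : Tm n) :
    nf (.cas θ (.cas φ s)) = nf (.cas (compB θ φ) s) := by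
  rw [nf]

theorem nf_cas_of_notCas (θ : Fin n → Ob n) (t : Tm n) (ht : NotCas t) :
    nf (.cas θ t) = .cas (fun c => nfO (θ c)) (nf t) :=
  nf.eq_6 θ t ht

theorem nf_cas_congr {θ₁ θ₂ : Fin n → Ob n} (h : ∀ c, nfO (θ₁ c) = nfO (θ₂ c)) (r : Tm n) :
    nf (.cas θ₁ r) = nf (.cas θ₂ r) := by
  rcases notCas_or_eq_cas r with hr | ⟨φ, s, rfl⟩
  · simp only [nf_cas_of_notCas _ _ hr, h]
  · rw [nf_cas_cas, nf_cas_cas]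
    refine nf_cas_congr (fun c => ?_) s
    cases hc : φ c with
    | none => simp only [compB, hc, casO]
    | some u => simp only [compB, hc, casO, nfO, nf_cas_congr h u]
termination_by mes r
decreasing_by
  all_goals subst_vars
  · exact mes_lt_cas_of_branch s hc
  · exact mes_lt_cas φ s

theorem nf_eq_self_of_normal (t : Tm n) : (∀ v, ¬ StepCC t v) → nf t = t := by
  refine nf.induct (motive1 := fun t => (∀ v, ¬ StepCC t v) → nf t = t)
    (motive2 := fun o => (∀ u, o = .some u → ∀ v, ¬ StepCC u v) → nfO o = o)
    ?var ?app ?lam ?cst ?casCas ?cas ?none ?some t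
  case var | cst => intros; rw [nf]
  case app =>
    intro t u iht ihu ht
    rw [nf, iht fun v hv => ht _ (.appL u hv), ihu fun v hv => ht _ (.appR t hv)]
  case lam =>
    intro t iht ht
    rw [nf, iht fun v hv => ht _ (.lamC hv)]
  case casCas =>
    intro θ φ s _ ht
    exact (ht _ (.caseCase θ φ s)).elim
  case cas =>
    intro θ t hnot ihθ iht ht
    rw [nf_cas_of_notCas θ t hnot, iht fun v hv => ht _ (.casT θ hv)]
    congr 1
    funext c
    exact ihθ c fun u hc v hv => ht _ (.casB θ c t hc hv)
  case none => intro; rw [nfO]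
  case some =>
    intro t iht ht
    rw [nfO, iht (ht t rfl)]

theorem nf_cas_congr_of_notCas {θ : Fin n → Ob n} {t t' : Tm n} (ht : NotCas t)
    (ht' : NotCas t') (h : nf t = nf t') : nf (.cas θ t) = nf (.cas θ t') := by
  rw [nf_cas_of_notCas θ t ht, nf_cas_of_notCas θ t' ht', h]

/- `nf (.cas θ t)` is not a function of `nf t` when `t` is itself a case, so the invariance
has to be carried under one case-binding through the induction. -/
theorem nf_eq_of_stepCC {t t' : Tm n} (h : StepCC t t') :
    nf t = nf t' ∧ ∀ θ, nf (.cas θ t) = nf (.cas θ t') := by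
  induction h with
  | caseCase θ φ s =>
    refine ⟨nf_cas_cas θ φ s, fun ψ => ?_⟩
    rw [nf_cas_cas, nf_cas_cas, nf_cas_cas]
    refine nf_cas_congr (fun c => ?_) s
    cases hc : φ c with
    | none => simp only [compB, hc, casO]
    | some u => simp only [compB, hc, casO, nfO, nf_cas_cas]
  | @appL t t' u _ ih =>
    have h : nf (.app t u) = nf (.app t' u) := by rw [nf, nf, ih.1]
    exact ⟨h, fun θ => nf_cas_congr_of_notCas nofun nofun h⟩
  | @appR t u u' _ ih =>
    have h : nf (.app t u) = nf (.app t u') := by rw [nf, nf, ih.1]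
    exact ⟨h, fun θ => nf_cas_congr_of_notCas nofun nofun h⟩
  | @lamC t t' _ ih =>
    have h : nf (.lam t) = nf (.lam t') := by rw [nf, nf, ih.1]
    exact ⟨h, fun θ => nf_cas_congr_of_notCas nofun nofun h⟩
  | casT θ _ ih =>
    exact ⟨ih.2 θ, fun ψ => by rw [nf_cas_cas, nf_cas_cas]; exact ih.2 (compB ψ θ)⟩
  | @casB θ c u u' t hc _ ih =>
    constructor
    · refine nf_cas_congr (fun c' => ?_) t
      rcases eq_or_ne c' c with rfl | hc'
      · simp only [hc, Function.update_self, nfO, ih.1]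
      · rw [Function.update_of_ne hc']
    · intro ψ
      rw [nf_cas_cas, nf_cas_cas]
      refine nf_cas_congr (fun c' => ?_) t
      rcases eq_or_ne c' c with rfl | hc'
      · simp only [compB, casO, hc, Function.update_self, nfO, ih.2 ψ]
      · simp only [compB, Function.update_of_ne hc']

theorem nf_eq_of_reflTransGen {t t' : Tm n} (h : Relation.ReflTransGen StepCC t t') :
    nf t = nf t' := by
  induction h with
  | refl => rfl
  | tail _ hstep ih => exact ih.trans (nf_eq_of_stepCC hstep).1

theorem nf_eq_of_reflTransGen_of_normal {t b : Tm n} (h : Relation.ReflTransGen StepCC t b)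
    (hb : ∀ v, ¬ StepCC b v) : nf t = b :=
  (nf_eq_of_reflTransGen h).trans (nf_eq_self_of_normal b hb)

section Completion

variable [NeZero n]

def cplB (θ : Fin n → Ob n) : Fin n → Ob n := fun c => .some (cplO (θ c))

theorem cpl_cas (θ : Fin n → Ob n) (t : Tm n) : cpl (.cas θ t) = .cas (cplB θ) (cpl t) := by
  rw [cpl]; rfl

theorem notCas_cpl : ∀ {t : Tm n}, NotCas t → NotCas (cpl t)
  | .var _, _ | .app _ _, _ | .lam _, _ | .cst _, _ => by rw [cpl]; exact nofun
  | .cas φ s, h => (h φ s rfl).elim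

theorem nf_failTm : nf (failTm : Tm n) = failTm := by
  unfold failTm
  rw [nf_cas_of_notCas _ (.cst 0) nofun, nf]
  simp only [nfO]

theorem nf_cas_failTm (θ : Fin n → Ob n) : nf (.cas θ (failTm : Tm n)) = failTm := by
  unfold failTm
  rw [nf_cas_cas]
  exact nf_failTm

/- A branch missing from `φ` becomes `{⌈θ⌉}·{}·c₁` on the left and `{}·c₁` on the right;
one CaseCase step identifies them. -/
theorem nfO_compB_cplB (θ φ : Fin n → Ob n) (c : Fin n) :
    nfO (compB (cplB θ) (cplB φ) c) = nfO (cplB (compB θ φ) c) := by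
  cases hc : φ c with
  | none => simp only [compB, cplB, casO, hc, cplO, nfO, nf_cas_failTm, nf_failTm]
  | some u => simp only [compB, cplB, casO, hc, cplO, cpl_cas]

theorem nf_cpl (t : Tm n) : nf (cpl t) = cpl (nf t) := by
  refine nf.induct (motive1 := fun t => nf (cpl t) = cpl (nf t))
    (motive2 := fun o => nf (cplO o) = cplO (nfO o))
    ?var ?app ?lam ?cst ?casCas ?cas ?none ?some t
  case var | cst => intros; simp only [cpl, nf]
  case app =>
    intro t u iht ihu
    rw [cpl, nf, nf, cpl, iht, ihu]
  case lam =>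
    intro t iht
    rw [cpl, nf, nf, cpl, iht]
  case casCas =>
    intro θ φ s ih
    rw [cpl_cas, cpl_cas, nf_cas_cas, nf_cas_cas, ← ih, cpl_cas]
    exact nf_cas_congr (nfO_compB_cplB θ φ) (cpl s)
  case cas =>
    intro θ t ht ihθ iht
    rw [cpl_cas, nf_cas_of_notCas _ _ (notCas_cpl ht), nf_cas_of_notCas _ _ ht, cpl_cas, iht]
    congr 1
    funext c
    simp only [cplB, nfO, ihθ c]
  case none => simp only [cplO, nfO, nf_failTm]
  case some =>
    intro t iht
    simp only [cplO, nfO, iht]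

end Completion

/-- Case-completion commutes with CaseCase-normalisation:
the CaseCase normal form of `⌈t⌉` equals the case-completion of the CaseCase
normal form of `t` (normal forms being characterised as irreducible reducts). -/
theorem cnf_cpl_comm {n : ℕ} [NeZero n] {t a b : Tm n}
    (ha : Relation.ReflTransGen StepCC (cpl t) a) (hna : ∀ v, ¬ StepCC a v)
    (hb : Relation.ReflTransGen StepCC t b) (hnb : ∀ v, ¬ StepCC b v) :
    a = cpl b := by
  rw [← nf_eq_of_reflTransGen_of_normal ha hna, ← nf_eq_of_reflTransGen_of_normal hb hnb, nf_cpl]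

end LC
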